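/- Let P be a transition probability function on a separable metric space X and let τ be a finite signed Borel measure with τP = τ (where the action of P is extended linearly). If τ = τ⁺ − τ⁻ is the Jordan decomposition, then τ⁺P = τ⁺ and τ⁻P = τ⁻. -/

import Mathlib

open MeasureTheory Set
open scoped ENNReal NNReal

/-!
Let `s` carry `τ⁻` and be null for `τ⁺`. Evaluating `τ⁺P + τ⁻ = τ⁻P + τ⁺` on `sᶜ` gives
`τ⁺P(sᶜ) = τ⁻P(sᶜ) + τ⁺(X)`, and since `P` does not increase mass, `τ⁺P(sᶜ) ≤ τ⁺(X)`; hence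
`τ⁻P(sᶜ) = 0`. Symmetrically `τ⁺P(s) = 0`. So `τ⁺P` and `τ⁺` live on `sᶜ` while `τ⁻P` and
`τ⁻` live on `s`, and restricting the identity to either set separates the two equations.
-/

namespace MeasureTheory.Measure

variable {α : Type*} [MeasurableSpace α]

theorem bind_apply_univ_le {μ : Measure α} {P : α → Measure α} (hP : ∀ x, P x univ ≤ 1) :
    μ.bind P univ ≤ μ univ :=
  calc μ.bind P univ ≤ ∫⁻ x, P x univ ∂μ := bind_apply_le P MeasurableSet.univ
    _ ≤ ∫⁻ _, 1 ∂μ := lintegral_mono hP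
    _ = μ univ := lintegral_one

theorem bind_apply_eq_zero_of_add_apply_eq {μ ν : Measure α} [IsFiniteMeasure μ]
    {P : α → Measure α} (hP : ∀ x, P x univ ≤ 1) {t : Set α}
    (hμ : μ tᶜ = 0) (hν : ν t = 0) (h : μ.bind P t + ν t = ν.bind P t + μ t) :
    ν.bind P t = 0 := by
  have hμt : μ t = μ univ := measure_congr (ae_eq_univ.mpr hμ)
  have hle : ν.bind P t + μ univ ≤ 0 + μ univ :=
    calc ν.bind P t + μ univ = μ.bind P t := by rw [← hμt, ← h, hν, add_zero]
      _ ≤ μ.bind P univ := measure_mono (subset_univ t)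
      _ ≤ 0 + μ univ := by rw [zero_add]; exact bind_apply_univ_le hP
  exact nonpos_iff_eq_zero.mp (ENNReal.le_of_add_le_add_right (measure_ne_top μ univ) hle)

theorem eq_of_add_eq_add_of_apply_eq_zero {ρ₁ ρ₂ σ₁ σ₂ : Measure α} {t : Set α}
    (hρ₁ : ρ₁ tᶜ = 0) (hρ₂ : ρ₂ tᶜ = 0) (hσ₁ : σ₁ t = 0) (hσ₂ : σ₂ t = 0)
    (h : ρ₁ + σ₁ = ρ₂ + σ₂) : ρ₁ = ρ₂ := by
  have hrestrict := congrArg (·.restrict t) h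
  simpa only [restrict_add, restrict_eq_self_of_ae_mem (ae_iff.mpr hρ₁),
    restrict_eq_self_of_ae_mem (ae_iff.mpr hρ₂), restrict_eq_zero.mpr hσ₁,
    restrict_eq_zero.mpr hσ₂, add_zero] using hrestrict

theorem bind_eq_self_of_mutuallySingular {μ ν : Measure α} [IsFiniteMeasure μ]
    [IsFiniteMeasure ν] (hμν : μ ⟂ₘ ν) {P : α → Measure α} (hP : ∀ x, P x univ ≤ 1)
    (hinv : μ.bind P + ν = ν.bind P + μ) :
    μ.bind P = μ ∧ ν.bind P = ν := by
  obtain ⟨s, -, hμs, hνs⟩ := hμν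
  have happly (t : Set α) : μ.bind P t + ν t = ν.bind P t + μ t := by
    simpa only [add_apply] using congrArg (· t) hinv
  have hνP : ν.bind P sᶜ = 0 :=
    bind_apply_eq_zero_of_add_apply_eq hP (by rwa [compl_compl]) hνs (happly sᶜ)
  have hμP : μ.bind P s = 0 :=
    bind_apply_eq_zero_of_add_apply_eq hP hνs hμs (happly s).symm
  have hswap : μ.bind P + ν = μ + ν.bind P := by rw [hinv, add_comm]
  have hμPs : μ.bind P sᶜᶜ = 0 := by rwa [compl_compl]
  have hμs' : μ sᶜᶜ = 0 := by rwa [compl_compl]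
  exact ⟨eq_of_add_eq_add_of_apply_eq_zero hμPs hμs' hνs hνP hswap,
    eq_of_add_eq_add_of_apply_eq_zero hνP hνs hμs hμP (by rw [← hinv, add_comm])⟩

end MeasureTheory.Measure

theorem stmt1 {X : Type*} [MeasurableSpace X]
    (P : X → Measure X) (hPprob : ∀ x, IsProbabilityMeasure (P x))
    (τ : SignedMeasure X)
    (hinv : τ.toJordanDecomposition.posPart.bind P + τ.toJordanDecomposition.negPart
      = τ.toJordanDecomposition.negPart.bind P + τ.toJordanDecomposition.posPart) :
    τ.toJordanDecomposition.posPart.bind P = τ.toJordanDecomposition.posPart ∧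
      τ.toJordanDecomposition.negPart.bind P = τ.toJordanDecomposition.negPart :=
  Measure.bind_eq_self_of_mutuallySingular τ.toJordanDecomposition.mutuallySingular
    (fun x => (hPprob x).measure_univ.le) hinv
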